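/- arXiv:1307.4034 — 2 statements merged into one kernel-verified Lean document; each statement's English description precedes it below -/
import Mathlib

section
/- For all real numbers α, γ > 0 with α + γ > d, there exists a constant C = C(α, γ) < ∞ such that for all nonzero k ∈ ℤ^d, the sum over pairs of nonzero m, n ∈ ℤ^d with m + n = k of 1/(|m|^α |n|^γ) is at most C(1+|k|)^{-β} if α ≠ d and γ ≠ d, and at most C(1+|k|)^{-β} log(1+|k|) if α = d or γ = d, where β = min{α, γ, α + γ - d}. -/
/-!
Split the sum according to which of `m`, `k - m` is shorter: the longer one has length at least
`R = max 1 (|k| / 2)`, so each term is at most `K_{α,γ}(|m|) + K_{γ,α}(|k - m|)` for the radial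
kernel `K_{s,t}(x) = x⁻ˢ max(x, R)⁻ᵗ`. A lattice sum of a decreasing radial function is dominated,
shell by shell of the sup norm (the `j`-th shell has `O(j^{d-1})` points, all of length `≥ j`), by
the one-dimensional sum `∑ⱼ j^{d-1} K(j)`. Comparing with integrals, the range `j ≤ R` contributes
`R⁻ᵗ R^{d-s}`, `R⁻ᵗ log R` or `R⁻ᵗ` according as `s < d`, `s = d` or `s > d`, and the range
`j > R` contributes `R^{d-s-t}`.
-/

open scoped ENNReal

/-- Euclidean norm of a lattice point in `ℤ^d`. -/
noncomputable def latNorm {d : ℕ} (m : Fin d → ℤ) : ℝ :=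
  Real.sqrt (∑ i, ((m i : ℝ))^2)

open Finset Set

section LatticeNorm

variable {d : ℕ}

lemma latNorm_eq_norm (m : Fin d → ℤ) :
    latNorm m = ‖WithLp.toLp 2 (fun i => (m i : ℝ))‖ := by
  simp [latNorm, EuclideanSpace.norm_eq]

lemma latNorm_nonneg (m : Fin d → ℤ) : 0 ≤ latNorm m := Real.sqrt_nonneg _

lemma latNorm_zero : latNorm (0 : Fin d → ℤ) = 0 := by simp [latNorm]

lemma latNorm_add_le (m n : Fin d → ℤ) : latNorm (m + n) ≤ latNorm m + latNorm n := by
  have h : (WithLp.toLp 2 fun i => ((m + n) i : ℝ)) =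
      WithLp.toLp 2 (fun i => (m i : ℝ)) + WithLp.toLp 2 fun i => (n i : ℝ) := by
    ext i; simp
  rw [latNorm_eq_norm, latNorm_eq_norm, latNorm_eq_norm, h]
  exact norm_add_le _ _

lemma abs_le_latNorm (m : Fin d → ℤ) (i : Fin d) : |(m i : ℝ)| ≤ latNorm m :=
  Real.abs_le_sqrt <| Finset.single_le_sum (f := fun j => ((m j : ℝ)) ^ 2)
    (fun _ _ => sq_nonneg _) (Finset.mem_univ i)

lemma one_le_latNorm {m : Fin d → ℤ} (hm : m ≠ 0) : 1 ≤ latNorm m := by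
  obtain ⟨i, hi⟩ := Function.ne_iff.mp hm
  calc (1 : ℝ) ≤ |(m i : ℝ)| := by exact_mod_cast Int.one_le_abs hi
    _ ≤ latNorm m := abs_le_latNorm m i

end LatticeNorm

noncomputable def latticeBox (d n : ℕ) : Finset (Fin d → ℤ) :=
  Fintype.piFinset fun _ => Finset.Icc (-(n : ℤ)) n

section LatticeBox

variable {d : ℕ}

lemma mem_latticeBox {n : ℕ} {m : Fin d → ℤ} : m ∈ latticeBox d n ↔ ∀ i, |m i| ≤ n := by
  simp [latticeBox, abs_le]

lemma latticeBox_mono : Monotone (latticeBox d) := fun a b hab m hm =>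
  mem_latticeBox.mpr fun i => (mem_latticeBox.mp hm i).trans (by exact_mod_cast hab)

lemma latticeBox_zero : latticeBox d 0 = {0} := by
  ext m; simp [mem_latticeBox, funext_iff]

lemma exists_subset_latticeBox (S : Finset (Fin d → ℤ)) : ∃ N, S ⊆ latticeBox d N := by
  refine ⟨S.sup fun m => univ.sup fun i => (m i).natAbs, fun m hm => mem_latticeBox.mpr fun i => ?_⟩
  have h : (m i).natAbs ≤ S.sup fun m => univ.sup fun i => (m i).natAbs :=
    le_sup_of_le hm (le_sup (f := fun i => (m i).natAbs) (mem_univ i))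
  rw [Int.abs_eq_natAbs]; exact_mod_cast h

lemma card_latticeBox (n : ℕ) : #(latticeBox d n) = (2 * n + 1) ^ d := by
  simp only [latticeBox, Fintype.card_piFinset, Int.card_Icc, prod_const, card_univ,
    Fintype.card_fin]
  congr 1; omega

lemma card_latticeBox_succ_sdiff_le (k : ℕ) :
    #(latticeBox d (k + 1) \ latticeBox d k) ≤ 2 * d * (2 * k + 3) ^ (d - 1) := by
  rw [card_sdiff_of_subset (latticeBox_mono k.le_succ), card_latticeBox, card_latticeBox]
  have h := (le_abs_self _).trans (abs_pow_sub_pow_le (2 * (k : ℤ) + 3) (2 * k + 1) d)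
  rw [show (2 * (k : ℤ) + 3) - (2 * k + 1) = 2 by ring, abs_two,
    max_eq_left (abs_le_abs (by omega) (by omega)), abs_of_nonneg (by positivity)] at h
  rw [Nat.sub_le_iff_le_add, show 2 * (k + 1) + 1 = 2 * k + 3 by ring]
  zify
  linarith

lemma succ_le_latNorm_of_mem_sdiff {k : ℕ} {m : Fin d → ℤ}
    (hm : m ∈ latticeBox d (k + 1) \ latticeBox d k) : (k : ℝ) + 1 ≤ latNorm m := by
  obtain ⟨i, hi⟩ : ∃ i, ¬ |m i| ≤ k := by simpa [mem_latticeBox] using (mem_sdiff.mp hm).2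
  calc (k : ℝ) + 1 ≤ |(m i : ℝ)| := by exact_mod_cast (by omega : (k : ℤ) + 1 ≤ |m i|)
    _ ≤ latNorm m := abs_le_latNorm m i

end LatticeBox

section RadialSum

variable {d : ℕ} {f : ℝ → ℝ}

lemma sum_latNorm_shell_le (hf : AntitoneOn f (Ici 1)) (hf_nonneg : ∀ x, 0 ≤ x → 0 ≤ f x)
    (k : ℕ) :
    ∑ m ∈ latticeBox d (k + 1) \ latticeBox d k, f (latNorm m)
      ≤ 2 * d * 3 ^ (d - 1) * (((k : ℝ) + 1) ^ (d - 1) * f (k + 1)) := by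
  have hterm : ∀ m ∈ latticeBox d (k + 1) \ latticeBox d k, f (latNorm m) ≤ f (k + 1) :=
    fun m hm => hf (by simp) (by simp; linarith [succ_le_latNorm_of_mem_sdiff hm])
      (succ_le_latNorm_of_mem_sdiff hm)
  have hfk : 0 ≤ f (k + 1) := hf_nonneg _ (by positivity)
  calc ∑ m ∈ latticeBox d (k + 1) \ latticeBox d k, f (latNorm m)
      ≤ #(latticeBox d (k + 1) \ latticeBox d k) * f (k + 1) := by
        simpa using sum_le_card_nsmul _ _ _ hterm
    _ ≤ (2 * d * (2 * k + 3) ^ (d - 1) : ℕ) * f (k + 1) := by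
        gcongr; exact_mod_cast card_latticeBox_succ_sdiff_le k
    _ ≤ _ := by
        push_cast
        rw [← mul_assoc, mul_assoc _ (3 ^ (d - 1)), ← mul_pow]
        gcongr
        linarith

lemma exists_sum_latNorm_le (hf : AntitoneOn f (Ici 1)) (hf_nonneg : ∀ x, 0 ≤ x → 0 ≤ f x)
    (hf0 : f 0 = 0) (S : Finset (Fin d → ℤ)) :
    ∃ N, ∑ m ∈ S, f (latNorm m)
      ≤ 2 * d * 3 ^ (d - 1) * ∑ k ∈ range N, ((k : ℝ) + 1) ^ (d - 1) * f (k + 1) := by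
  obtain ⟨N, hN⟩ := exists_subset_latticeBox S
  refine ⟨N, ?_⟩
  calc ∑ m ∈ S, f (latNorm m) ≤ ∑ m ∈ latticeBox d N, f (latNorm m) :=
        sum_le_sum_of_subset_of_nonneg hN fun m _ _ => hf_nonneg _ (latNorm_nonneg m)
    _ = ∑ k ∈ range N, ∑ m ∈ latticeBox d (k + 1) \ latticeBox d k, f (latNorm m) := by
        rw [sum_eq_sum_range_sdiff _ latticeBox_mono, latticeBox_zero, sum_singleton,
          latNorm_zero, hf0, zero_add]
    _ ≤ _ := by
        rw [mul_sum]
        exact sum_le_sum fun k _ => sum_latNorm_shell_le hf hf_nonneg k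

end RadialSum

section PowerSums

variable {r : ℝ}

lemma sum_Ico_rpow_le_integral (hr : r ≤ 0) {n N : ℕ} (hn : 1 ≤ n) (hnN : n ≤ N) :
    ∑ k ∈ Ico n N, ((k : ℝ) + 1) ^ r ≤ ∫ x in (n : ℝ)..N, x ^ r := by
  have h := AntitoneOn.sum_le_integral_Ico hnN
    ((Real.antitoneOn_rpow_Ioi_of_exponent_nonpos hr).mono fun x hx =>
      (show (0 : ℝ) < n by exact_mod_cast hn).trans_le hx.1)
  simpa using h

lemma sum_Ico_rpow_le_of_lt_neg_one (hr : r < -1) {n : ℕ} (hn : 1 ≤ n) (N : ℕ) :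
    ∑ k ∈ Ico n N, ((k : ℝ) + 1) ^ r ≤ (n : ℝ) ^ (r + 1) / -(r + 1) := by
  have hn₀ : (0 : ℝ) < n := by exact_mod_cast hn
  have h := AntitoneOn.sum_Ico_le_integral (a := n) (b := N) (f := fun x : ℝ => x ^ r)
    ((Real.antitoneOn_rpow_Ioi_of_exponent_nonpos (by linarith)).mono fun x hx =>
      hn₀.trans_le hx.1)
    (integrableOn_Ioi_rpow_of_lt hr hn₀) fun x hx => Real.rpow_nonneg (hn₀.trans hx).le r
  rw [integral_Ioi_rpow_of_lt hr hn₀, neg_div, ← div_neg] at h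
  simpa using h

lemma sum_range_rpow_le_of_lt_neg_one (hr : r < -1) (N : ℕ) :
    ∑ k ∈ range N, ((k : ℝ) + 1) ^ r ≤ 1 + 1 / -(r + 1) := by
  rcases N.eq_zero_or_pos with rfl | hN
  · have : 0 < -(r + 1) := by linarith
    simp only [range_zero, sum_empty]; positivity
  rw [sum_range_eq_add_Ico _ hN]
  simpa using sum_Ico_rpow_le_of_lt_neg_one hr le_rfl N

lemma sum_range_rpow_le_of_neg_one_lt (hr : -1 < r) (n : ℕ) :
    ∑ k ∈ range n, ((k : ℝ) + 1) ^ r ≤ (1 + 1 / (r + 1)) * (n : ℝ) ^ (r + 1) := by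
  have hr₁ : 0 < r + 1 := by linarith
  have hpow : 0 ≤ (n : ℝ) ^ (r + 1) := by positivity
  rcases le_or_gt 0 r with hr₀ | hr₀
  · calc ∑ k ∈ range n, ((k : ℝ) + 1) ^ r ≤ ∑ _k ∈ range n, (n : ℝ) ^ r := by
          gcongr with k hk
          exact_mod_cast Finset.mem_range.mp hk
      _ = (n : ℝ) ^ (r + 1) := by
          rcases n.eq_zero_or_pos with rfl | hn
          · simp [Real.zero_rpow hr₁.ne']
          · rw [sum_const, card_range, nsmul_eq_mul, Real.rpow_add_one (by positivity)]; ring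
      _ ≤ _ := le_mul_of_one_le_left hpow (by simp; positivity)
  rcases n.eq_zero_or_pos with rfl | hn
  · simp [Real.zero_rpow hr₁.ne']
  have hn₁ : (1 : ℝ) ≤ (n : ℝ) ^ (r + 1) := Real.one_le_rpow (by exact_mod_cast hn) hr₁.le
  have hint := sum_Ico_rpow_le_integral hr₀.le le_rfl hn
  rw [integral_rpow (Or.inl hr)] at hint
  rw [sum_range_eq_add_Ico _ hn]
  calc _ ≤ 1 + ((n : ℝ) ^ (r + 1) - 1) / (r + 1) := by simpa using hint
    _ ≤ _ := by
      rw [add_mul, one_mul, div_mul_eq_mul_div, one_mul, sub_div]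
      linarith [div_nonneg zero_le_one hr₁.le]

lemma sum_range_rpow_neg_one_le (n : ℕ) :
    ∑ k ∈ range n, ((k : ℝ) + 1) ^ (-1 : ℝ) ≤ 1 + Real.log n := by
  have h := harmonic_le_one_add_log n
  simp only [harmonic, Rat.cast_sum, Rat.cast_inv, Nat.cast_add, Nat.cast_one] at h
  simpa [Real.rpow_neg_one] using h

end PowerSums

noncomputable def cutoffRpow (s t R x : ℝ) : ℝ := x ^ (-s) * max x R ^ (-t)

section CutoffRpow

variable {s t R x : ℝ}

lemma cutoffRpow_nonneg (hx : 0 ≤ x) : 0 ≤ cutoffRpow s t R x :=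
  mul_nonneg (Real.rpow_nonneg hx _) (Real.rpow_nonneg (hx.trans (le_max_left _ _)) _)

lemma cutoffRpow_zero (hs : s ≠ 0) : cutoffRpow s t R 0 = 0 := by
  simp [cutoffRpow, Real.zero_rpow (neg_ne_zero.mpr hs)]

lemma antitoneOn_cutoffRpow (hs : 0 ≤ s) (ht : 0 ≤ t) :
    AntitoneOn (cutoffRpow s t R) (Ioi 0) := fun x hx y hy hxy =>
  mul_le_mul (Real.rpow_le_rpow_of_nonpos hx hxy (by linarith))
    (Real.rpow_le_rpow_of_nonpos (lt_max_of_lt_left hx) (max_le_max_right R hxy) (by linarith))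
    (Real.rpow_nonneg ((le_of_lt hy).trans (le_max_left _ _)) _)
    (Real.rpow_nonneg (le_of_lt hx) _)

lemma cutoffRpow_le_rpow_mul (hR : 0 < R) (hx : 0 ≤ x) (ht : 0 ≤ t) :
    cutoffRpow s t R x ≤ R ^ (-t) * x ^ (-s) := by
  rw [cutoffRpow, mul_comm]
  exact mul_le_mul_of_nonneg_right
    (Real.rpow_le_rpow_of_nonpos hR (le_max_right _ _) (neg_nonpos.mpr ht)) (Real.rpow_nonneg hx _)

lemma cutoffRpow_le_rpow (hx : 0 < x) (ht : 0 ≤ t) : cutoffRpow s t R x ≤ x ^ (-s - t) := by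
  rw [cutoffRpow, sub_eq_add_neg, Real.rpow_add hx]
  exact mul_le_mul_of_nonneg_left
    (Real.rpow_le_rpow_of_nonpos hx (le_max_left _ _) (neg_nonpos.mpr ht))
    (Real.rpow_nonneg hx.le _)

end CutoffRpow

lemma sum_range_le_sum_range_add_sum_Ico {f g h : ℕ → ℝ} (hg : ∀ k, 0 ≤ g k)
    (hfg : ∀ k, f k ≤ g k) (hfh : ∀ k, f k ≤ h k) (n N : ℕ) :
    ∑ k ∈ range N, f k ≤ ∑ k ∈ range n, g k + ∑ k ∈ Ico n N, h k := by
  rcases le_total n N with hnN | hNn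
  · rw [← sum_range_add_sum_Ico f hnN]
    exact add_le_add (sum_le_sum fun k _ => hfg k) (sum_le_sum fun k _ => hfh k)
  · rw [Finset.Ico_eq_empty_of_le hNn, sum_empty, add_zero]
    exact (sum_le_sum fun k _ => hfg k).trans
      (sum_le_sum_of_subset_of_nonneg (range_subset_range.mpr hNn) fun k _ _ => hg k)

lemma pow_pred_mul_rpow {d : ℕ} (hd : 0 < d) {y : ℝ} (hy : 0 < y) (a : ℝ) :
    y ^ (d - 1) * y ^ a = y ^ ((d : ℝ) - 1 + a) := by
  rw [← Real.rpow_natCast, ← Real.rpow_add hy, Nat.cast_pred hd]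

lemma half_le_floor {R : ℝ} (hR : 1 ≤ R) : R / 2 ≤ ⌊R⌋₊ := by
  have h₁ : (1 : ℝ) ≤ ⌊R⌋₊ := by exact_mod_cast Nat.one_le_floor_iff R |>.mpr hR
  linarith [Nat.lt_floor_add_one R]

section ShellSums

variable {d : ℕ} {s t R : ℝ}

lemma sum_range_pow_mul_cutoffRpow_le (hd : 0 < d) (ht : 0 ≤ t) (hR : 0 < R) (n N : ℕ) :
    ∑ k ∈ range N, ((k : ℝ) + 1) ^ (d - 1) * cutoffRpow s t R (k + 1)
      ≤ R ^ (-t) * ∑ k ∈ range n, ((k : ℝ) + 1) ^ ((d : ℝ) - 1 - s)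
        + ∑ k ∈ Ico n N, ((k : ℝ) + 1) ^ ((d : ℝ) - 1 - s - t) := by
  rw [mul_sum]
  refine sum_range_le_sum_range_add_sum_Ico (fun k => by positivity) (fun k => ?_) (fun k => ?_) n N
  · calc _ ≤ ((k : ℝ) + 1) ^ (d - 1) * (R ^ (-t) * ((k : ℝ) + 1) ^ (-s)) := by
          gcongr; exact cutoffRpow_le_rpow_mul hR (by positivity) ht
      _ = _ := by rw [mul_left_comm, pow_pred_mul_rpow hd (by positivity), ← sub_eq_add_neg]
  · calc _ ≤ ((k : ℝ) + 1) ^ (d - 1) * ((k : ℝ) + 1) ^ (-s - t) := by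
          gcongr; exact cutoffRpow_le_rpow (by positivity) ht
      _ = _ := by rw [pow_pred_mul_rpow hd (by positivity)]; ring_nf

lemma exists_sum_range_pow_mul_cutoffRpow_le_of_lt (hd : 0 < d) (ht : 0 ≤ t) (hsd : s < d)
    (hst : d < s + t) : ∃ C, 0 < C ∧ ∀ R, 1 ≤ R → ∀ N,
      ∑ k ∈ range N, ((k : ℝ) + 1) ^ (d - 1) * cutoffRpow s t R (k + 1)
        ≤ C * R ^ (-(s + t - d)) := by
  have hds : 0 < (d : ℝ) - s := by linarith
  have hstd : 0 < s + t - d := by linarith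
  refine ⟨(1 + 1 / (d - s)) + 2 ^ (s + t - d) / (s + t - d), by positivity, fun R hR N => ?_⟩
  have hR₀ : 0 < R := by linarith
  set n := ⌊R⌋₊
  have hn : 1 ≤ n := Nat.one_le_floor_iff R |>.mpr hR
  have hhead : ∑ k ∈ range n, ((k : ℝ) + 1) ^ ((d : ℝ) - 1 - s) ≤ (1 + 1 / (d - s)) * R ^ (d - s) :=
    calc _ ≤ (1 + 1 / ((d : ℝ) - 1 - s + 1)) * (n : ℝ) ^ ((d : ℝ) - 1 - s + 1) :=
          sum_range_rpow_le_of_neg_one_lt (by linarith) n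
      _ ≤ _ := by
          rw [show (d : ℝ) - 1 - s + 1 = d - s by ring]
          gcongr
          exact Nat.floor_le hR₀.le
  have htail : ∑ k ∈ Ico n N, ((k : ℝ) + 1) ^ ((d : ℝ) - 1 - s - t)
      ≤ 2 ^ (s + t - d) / (s + t - d) * R ^ (-(s + t - d)) :=
    calc _ ≤ (n : ℝ) ^ ((d : ℝ) - 1 - s - t + 1) / -((d : ℝ) - 1 - s - t + 1) :=
          sum_Ico_rpow_le_of_lt_neg_one (by linarith) hn N
      _ ≤ (R / 2) ^ (-(s + t - d)) / (s + t - d) := by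
          rw [show (d : ℝ) - 1 - s - t + 1 = -(s + t - d) by ring, neg_neg]
          exact div_le_div_of_nonneg_right
            (Real.rpow_le_rpow_of_nonpos (by positivity) (half_le_floor hR) (by linarith))
            (by linarith)
      _ = _ := by
          rw [Real.div_rpow hR₀.le zero_le_two, Real.rpow_neg zero_le_two, div_inv_eq_mul]; ring
  calc _ ≤ _ := sum_range_pow_mul_cutoffRpow_le hd ht hR₀ n N
    _ ≤ R ^ (-t) * ((1 + 1 / (d - s)) * R ^ (d - s))
          + 2 ^ (s + t - d) / (s + t - d) * R ^ (-(s + t - d)) := by gcongr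
    _ = _ := by
      rw [mul_left_comm, ← Real.rpow_add hR₀, show -t + (d - s) = -(s + t - d) by ring]; ring

lemma exists_sum_range_pow_mul_cutoffRpow_le_log (hd : 0 < d) (ht : 0 < t) :
    ∃ C, 0 < C ∧ ∀ R, 1 ≤ R → ∀ N,
      ∑ k ∈ range N, ((k : ℝ) + 1) ^ (d - 1) * cutoffRpow d t R (k + 1)
        ≤ C * R ^ (-t) * (1 + Real.log R) := by
  refine ⟨1 + 2 ^ t / t, by positivity, fun R hR N => ?_⟩
  have hR₀ : 0 < R := by linarith
  have hlog : 0 ≤ Real.log R := Real.log_nonneg hR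
  set n := ⌊R⌋₊
  have hn : 1 ≤ n := Nat.one_le_floor_iff R |>.mpr hR
  have hhead : ∑ k ∈ range n, ((k : ℝ) + 1) ^ ((d : ℝ) - 1 - d) ≤ 1 + Real.log R :=
    calc _ ≤ 1 + Real.log n := by
          rw [show (d : ℝ) - 1 - d = -1 by ring]; exact sum_range_rpow_neg_one_le n
      _ ≤ _ := by gcongr; exact Nat.floor_le hR₀.le
  have htail : ∑ k ∈ Ico n N, ((k : ℝ) + 1) ^ ((d : ℝ) - 1 - d - t) ≤ 2 ^ t / t * R ^ (-t) :=
    calc _ ≤ (n : ℝ) ^ ((d : ℝ) - 1 - d - t + 1) / -((d : ℝ) - 1 - d - t + 1) :=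
          sum_Ico_rpow_le_of_lt_neg_one (by linarith) hn N
      _ ≤ (R / 2) ^ (-t) / t := by
          rw [show (d : ℝ) - 1 - d - t + 1 = -t by ring, neg_neg]
          exact div_le_div_of_nonneg_right
            (Real.rpow_le_rpow_of_nonpos (by positivity) (half_le_floor hR) (by linarith)) ht.le
      _ = _ := by
          rw [Real.div_rpow hR₀.le zero_le_two, Real.rpow_neg zero_le_two, div_inv_eq_mul]; ring
  calc _ ≤ _ := sum_range_pow_mul_cutoffRpow_le hd ht.le hR₀ n N
    _ ≤ R ^ (-t) * (1 + Real.log R) + 2 ^ t / t * R ^ (-t) := by gcongr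
    _ ≤ R ^ (-t) * (1 + Real.log R) + 2 ^ t / t * R ^ (-t) * (1 + Real.log R) :=
      add_le_add le_rfl (le_mul_of_one_le_right (by positivity) (by linarith))
    _ = _ := by ring

lemma sum_range_pow_mul_cutoffRpow_le_of_gt (hd : 0 < d) (ht : 0 ≤ t) (hsd : d < s)
    (hR : 0 < R) (N : ℕ) :
    ∑ k ∈ range N, ((k : ℝ) + 1) ^ (d - 1) * cutoffRpow s t R (k + 1)
      ≤ (1 + 1 / (s - d)) * R ^ (-t) := by
  calc _ ≤ R ^ (-t) * ∑ k ∈ range N, ((k : ℝ) + 1) ^ ((d : ℝ) - 1 - s) + 0 := by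
        simpa using sum_range_pow_mul_cutoffRpow_le (s := s) hd ht hR N N
    _ ≤ R ^ (-t) * (1 + 1 / -((d : ℝ) - 1 - s + 1)) + 0 := by
        gcongr; exact sum_range_rpow_le_of_lt_neg_one (by linarith) N
    _ = _ := by ring_nf

end ShellSums

section LatticeCutoffSums

variable {d : ℕ} {s t : ℝ}

lemma sum_cutoffRpow_latNorm_le (hs : 0 < s) (ht : 0 ≤ t) {R B : ℝ}
    (hB : ∀ N, ∑ k ∈ range N, ((k : ℝ) + 1) ^ (d - 1) * cutoffRpow s t R (k + 1) ≤ B)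
    (S : Finset (Fin d → ℤ)) :
    ∑ m ∈ S, cutoffRpow s t R (latNorm m) ≤ 2 * d * 3 ^ (d - 1) * B := by
  obtain ⟨N, hN⟩ := exists_sum_latNorm_le
    ((antitoneOn_cutoffRpow hs.le ht).mono fun x (hx : 1 ≤ x) => zero_lt_one.trans_le hx)
    (fun _ hx => cutoffRpow_nonneg hx) (cutoffRpow_zero hs.ne') S
  exact hN.trans (by gcongr; exact hB N)

lemma exists_sum_cutoffRpow_le (hd : 0 < d) (hs : 0 < s) (ht : 0 < t) (hst : d < s + t)
    (hsd : s ≠ d) : ∃ C, 0 < C ∧ ∀ R, 1 ≤ R → ∀ S : Finset (Fin d → ℤ),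
      ∑ m ∈ S, cutoffRpow s t R (latNorm m) ≤ C * R ^ (-min t (s + t - d)) := by
  rcases hsd.lt_or_gt with hsd | hsd
  · obtain ⟨C, hC, hbound⟩ := exists_sum_range_pow_mul_cutoffRpow_le_of_lt hd ht.le hsd hst
    refine ⟨2 * d * 3 ^ (d - 1) * C, by positivity, fun R hR S => ?_⟩
    rw [min_eq_right (by linarith), mul_assoc]
    exact sum_cutoffRpow_latNorm_le hs ht.le (hbound R hR) S
  · have hsd' : 0 < s - d := by linarith
    refine ⟨2 * d * 3 ^ (d - 1) * (1 + 1 / (s - d)), by positivity, fun R hR S => ?_⟩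
    rw [min_eq_left (by linarith), mul_assoc]
    exact sum_cutoffRpow_latNorm_le hs ht.le
      (sum_range_pow_mul_cutoffRpow_le_of_gt hd ht.le hsd (by linarith)) S

lemma exists_sum_cutoffRpow_le_log (hd : 0 < d) (hs : 0 < s) (ht : 0 < t) (hst : d < s + t) :
    ∃ C, 0 < C ∧ ∀ R, 1 ≤ R → ∀ S : Finset (Fin d → ℤ),
      ∑ m ∈ S, cutoffRpow s t R (latNorm m)
        ≤ C * R ^ (-min t (s + t - d)) * (1 + Real.log R) := by
  by_cases hsd : s = d
  · subst hsd
    obtain ⟨C, hC, hbound⟩ := exists_sum_range_pow_mul_cutoffRpow_le_log hd ht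
    refine ⟨2 * d * 3 ^ (d - 1) * C, by positivity, fun R hR S => ?_⟩
    rw [show (d : ℝ) + t - d = t by ring, min_self, mul_assoc, mul_assoc, ← mul_assoc C]
    exact sum_cutoffRpow_latNorm_le hs ht.le (hbound R hR) S
  · obtain ⟨C, hC, hbound⟩ := exists_sum_cutoffRpow_le hd hs ht hst hsd
    refine ⟨C, hC, fun R hR S => (hbound R hR S).trans ?_⟩
    exact le_mul_of_one_le_right (by positivity) (by linarith [Real.log_nonneg hR])

end LatticeCutoffSums

lemma one_div_rpow_mul_rpow_le_cutoffRpow {s t R a b : ℝ} (ha : 0 < a) (ht : 0 ≤ t)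
    (hb : max a R ≤ b) : 1 / (a ^ s * b ^ t) ≤ cutoffRpow s t R a := by
  have hmax : 0 < max a R := lt_max_of_lt_left ha
  rw [one_div, mul_inv, ← Real.rpow_neg ha.le, ← Real.rpow_neg (hmax.trans_le hb).le, cutoffRpow]
  exact mul_le_mul_of_nonneg_left (Real.rpow_le_rpow_of_nonpos hmax hb (neg_nonpos.mpr ht))
    (Real.rpow_nonneg ha.le _)

lemma rpow_neg_max_one_half_le {K β : ℝ} (hK : 1 ≤ K) (hβ : 0 ≤ β) :
    max 1 (K / 2) ^ (-β) ≤ 3 ^ β * (1 + K) ^ (-β) := by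
  have h : (1 + K) / 3 ≤ max 1 (K / 2) := by
    rcases le_total K 2 with hK2 | hK2
    · exact (by linarith : (1 + K) / 3 ≤ 1).trans (le_max_left _ _)
    · exact (by linarith : (1 + K) / 3 ≤ K / 2).trans (le_max_right _ _)
  calc max 1 (K / 2) ^ (-β) ≤ ((1 + K) / 3) ^ (-β) :=
        Real.rpow_le_rpow_of_nonpos (by positivity) h (neg_nonpos.mpr hβ)
    _ = _ := by
        rw [Real.div_rpow (by positivity) (by norm_num), Real.rpow_neg (by norm_num : (0 : ℝ) ≤ 3),
          div_inv_eq_mul, mul_comm]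

lemma one_add_log_max_one_half_le {K : ℝ} (hK : 1 ≤ K) :
    1 + Real.log (max 1 (K / 2)) ≤ (1 + 1 / Real.log 2) * Real.log (1 + K) := by
  have hlog2 : 0 < Real.log 2 := Real.log_pos one_lt_two
  have h₁ : Real.log 2 ≤ Real.log (1 + K) := Real.log_le_log two_pos (by linarith)
  have h₂ : Real.log (max 1 (K / 2)) ≤ Real.log (1 + K) :=
    Real.log_le_log (by positivity) (max_le (by linarith) (by linarith))
  have h₃ : 1 ≤ 1 / Real.log 2 * Real.log (1 + K) := by
    rw [one_div_mul_eq_div, le_div_iff₀ hlog2]; linarith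
  linarith

lemma tsum_ofReal_le_ofReal {ι : Type*} {f : ι → ℝ} (hf : ∀ i, 0 ≤ f i) {B : ℝ}
    (h : ∀ S : Finset ι, ∑ i ∈ S, f i ≤ B) : ∑' i, ENNReal.ofReal (f i) ≤ ENNReal.ofReal B := by
  rw [← ENNReal.ofReal_tsum_of_nonneg hf (summable_of_sum_le hf h)]
  exact ENNReal.ofReal_le_ofReal (Real.tsum_le_of_sum_le hf h)

section Convolution

variable {d : ℕ} {α γ : ℝ}

lemma one_div_latNorm_rpow_mul_le (hα : 0 < α) (hγ : 0 < γ) (k m : Fin d → ℤ) :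
    1 / (latNorm m ^ α * latNorm (k - m) ^ γ)
      ≤ cutoffRpow α γ (max 1 (latNorm k / 2)) (latNorm m)
        + cutoffRpow γ α (max 1 (latNorm k / 2)) (latNorm (k - m)) := by
  have h₁ := cutoffRpow_nonneg (s := α) (t := γ) (R := max 1 (latNorm k / 2)) (latNorm_nonneg m)
  have h₂ := cutoffRpow_nonneg (s := γ) (t := α) (R := max 1 (latNorm k / 2))
    (latNorm_nonneg (k - m))
  -- for `m = 0` and `m = k` the left side is `1 / 0 = 0`
  rcases eq_or_ne m 0 with rfl | hm
  · simpa [latNorm_zero, Real.zero_rpow hα.ne'] using add_nonneg h₁ h₂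
  rcases eq_or_ne (k - m) 0 with hkm | hkm
  · simpa [hkm, latNorm_zero, Real.zero_rpow hγ.ne'] using add_nonneg h₁ h₂
  have ha := one_le_latNorm hm
  have hb := one_le_latNorm hkm
  have htri : latNorm k ≤ latNorm m + latNorm (k - m) := by
    simpa using latNorm_add_le m (k - m)
  rcases le_total (latNorm m) (latNorm (k - m)) with hab | hab
  · refine (one_div_rpow_mul_rpow_le_cutoffRpow (by linarith) hγ.le ?_).trans
      (le_add_of_nonneg_right h₂)
    exact max_le hab (max_le hb (by linarith))
  · rw [mul_comm]
    refine (one_div_rpow_mul_rpow_le_cutoffRpow (by linarith) hα.le ?_).trans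
      (le_add_of_nonneg_left h₁)
    exact max_le hab (max_le ha (by linarith))

lemma sum_one_div_latNorm_rpow_mul_le (hα : 0 < α) (hγ : 0 < γ) (k : Fin d → ℤ)
    (S : Finset (Fin d → ℤ)) :
    ∑ m ∈ S, 1 / (latNorm m ^ α * latNorm (k - m) ^ γ)
      ≤ ∑ m ∈ S, cutoffRpow α γ (max 1 (latNorm k / 2)) (latNorm m)
        + ∑ n ∈ S.image (k - ·), cutoffRpow γ α (max 1 (latNorm k / 2)) (latNorm n) := by
  rw [sum_image fun _ _ _ _ h => sub_right_injective h, ← sum_add_distrib]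
  exact sum_le_sum fun m _ => one_div_latNorm_rpow_mul_le hα hγ k m

lemma sum_one_div_latNorm_rpow_mul_le_of_cutoff {w : ℝ → ℝ} {C₁ C₂ : ℝ} (hα : 0 < α)
    (hγ : 0 < γ) (hC₁ : 0 ≤ C₁) (hC₂ : 0 ≤ C₂) (hw : ∀ R, 1 ≤ R → 0 ≤ w R)
    (h₁ : ∀ R, 1 ≤ R → ∀ S : Finset (Fin d → ℤ),
      ∑ m ∈ S, cutoffRpow α γ R (latNorm m) ≤ C₁ * R ^ (-min γ (α + γ - d)) * w R)
    (h₂ : ∀ R, 1 ≤ R → ∀ S : Finset (Fin d → ℤ),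
      ∑ m ∈ S, cutoffRpow γ α R (latNorm m) ≤ C₂ * R ^ (-min α (γ + α - d)) * w R)
    (k : Fin d → ℤ) (S : Finset (Fin d → ℤ)) :
    ∑ m ∈ S, 1 / (latNorm m ^ α * latNorm (k - m) ^ γ)
      ≤ (C₁ + C₂) * max 1 (latNorm k / 2) ^ (-min α (min γ (α + γ - d)))
        * w (max 1 (latNorm k / 2)) := by
  set R := max 1 (latNorm k / 2)
  have hR : 1 ≤ R := le_max_left _ _
  have hwR := hw R hR
  have he₁ : R ^ (-min γ (α + γ - d)) ≤ R ^ (-min α (min γ (α + γ - d))) :=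
    Real.rpow_le_rpow_of_exponent_le hR (neg_le_neg (min_le_right _ _))
  have he₂ : R ^ (-min α (γ + α - d)) ≤ R ^ (-min α (min γ (α + γ - d))) := by
    refine Real.rpow_le_rpow_of_exponent_le hR (neg_le_neg ?_)
    rw [add_comm γ α]
    exact le_min (min_le_left _ _) ((min_le_right _ _).trans (min_le_right _ _))
  calc _ ≤ _ := sum_one_div_latNorm_rpow_mul_le hα hγ k S
    _ ≤ C₁ * R ^ (-min γ (α + γ - d)) * w R + C₂ * R ^ (-min α (γ + α - d)) * w R :=
        add_le_add (h₁ R hR S) (h₂ R hR _)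
    _ ≤ _ := by rw [add_mul, add_mul]; gcongr

lemma exists_sum_one_div_latNorm_rpow_mul_le (hd : 0 < d) (hα : 0 < α) (hγ : 0 < γ)
    (hsum : (d : ℝ) < α + γ) (hαd : α ≠ d) (hγd : γ ≠ d) :
    ∃ C, 0 < C ∧ ∀ k : Fin d → ℤ, k ≠ 0 → ∀ S : Finset (Fin d → ℤ),
      ∑ m ∈ S, 1 / (latNorm m ^ α * latNorm (k - m) ^ γ)
        ≤ C * (1 + latNorm k) ^ (-min α (min γ (α + γ - d))) := by
  obtain ⟨C₁, hC₁, h₁⟩ := exists_sum_cutoffRpow_le hd hα hγ hsum hαd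
  obtain ⟨C₂, hC₂, h₂⟩ := exists_sum_cutoffRpow_le hd hγ hα (by linarith) hγd
  have hβ : 0 ≤ min α (min γ (α + γ - d)) := le_min hα.le (le_min hγ.le (by linarith))
  refine ⟨(C₁ + C₂) * 3 ^ min α (min γ (α + γ - d)), by positivity, fun k hk S => ?_⟩
  calc _ ≤ (C₁ + C₂) * max 1 (latNorm k / 2) ^ (-min α (min γ (α + γ - d))) * 1 :=
        sum_one_div_latNorm_rpow_mul_le_of_cutoff (w := fun _ => 1) hα hγ hC₁.le hC₂.le
          (fun _ _ => zero_le_one) (fun R hR S => (h₁ R hR S).trans_eq (mul_one _).symm)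
          (fun R hR S => (h₂ R hR S).trans_eq (mul_one _).symm) k S
    _ ≤ (C₁ + C₂) * (3 ^ min α (min γ (α + γ - d)) *
          (1 + latNorm k) ^ (-min α (min γ (α + γ - d)))) := by
        rw [mul_one]; gcongr; exact rpow_neg_max_one_half_le (one_le_latNorm hk) hβ
    _ = _ := by ring

lemma exists_sum_one_div_latNorm_rpow_mul_le_log (hd : 0 < d) (hα : 0 < α) (hγ : 0 < γ)
    (hsum : (d : ℝ) < α + γ) :
    ∃ C, 0 < C ∧ ∀ k : Fin d → ℤ, k ≠ 0 → ∀ S : Finset (Fin d → ℤ),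
      ∑ m ∈ S, 1 / (latNorm m ^ α * latNorm (k - m) ^ γ)
        ≤ C * (1 + latNorm k) ^ (-min α (min γ (α + γ - d))) * Real.log (1 + latNorm k) := by
  obtain ⟨C₁, hC₁, h₁⟩ := exists_sum_cutoffRpow_le_log hd hα hγ hsum
  obtain ⟨C₂, hC₂, h₂⟩ := exists_sum_cutoffRpow_le_log hd hγ hα (by linarith)
  have hβ : 0 ≤ min α (min γ (α + γ - d)) := le_min hα.le (le_min hγ.le (by linarith))
  refine ⟨(C₁ + C₂) * 3 ^ min α (min γ (α + γ - d)) * (1 + 1 / Real.log 2),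
    by have := Real.log_pos one_lt_two; positivity, fun k hk S => ?_⟩
  calc _ ≤ (C₁ + C₂) * max 1 (latNorm k / 2) ^ (-min α (min γ (α + γ - d)))
          * (1 + Real.log (max 1 (latNorm k / 2))) :=
        sum_one_div_latNorm_rpow_mul_le_of_cutoff (w := fun R => 1 + Real.log R) hα hγ hC₁.le
          hC₂.le (fun R hR => by linarith [Real.log_nonneg hR]) h₁ h₂ k S
    _ ≤ (C₁ + C₂) * (3 ^ min α (min γ (α + γ - d)) *
          (1 + latNorm k) ^ (-min α (min γ (α + γ - d))))
          * ((1 + 1 / Real.log 2) * Real.log (1 + latNorm k)) := by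
        refine mul_le_mul (mul_le_mul_of_nonneg_left
          (rpow_neg_max_one_half_le (one_le_latNorm hk) hβ) (by positivity))
          (one_add_log_max_one_half_le (one_le_latNorm hk))
          (by linarith [Real.log_nonneg (le_max_left 1 (latNorm k / 2))])
          (by have := latNorm_nonneg k; positivity)
    _ = _ := by ring

lemma tsum_pairs_le_tsum (k : Fin d → ℤ) :
    ∑' p : {p : (Fin d → ℤ) × (Fin d → ℤ) // p.1 ≠ 0 ∧ p.2 ≠ 0 ∧ p.1 + p.2 = k},
        ENNReal.ofReal (1 / (latNorm p.1.1 ^ α * latNorm p.1.2 ^ γ))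
      ≤ ∑' m, ENNReal.ofReal (1 / (latNorm m ^ α * latNorm (k - m) ^ γ)) := by
  have hsnd (p : {p : (Fin d → ℤ) × (Fin d → ℤ) // p.1 ≠ 0 ∧ p.2 ≠ 0 ∧ p.1 + p.2 = k}) :
      p.1.2 = k - p.1.1 := eq_sub_of_add_eq' p.2.2.2
  have hinj : Function.Injective fun p :
      {p : (Fin d → ℤ) × (Fin d → ℤ) // p.1 ≠ 0 ∧ p.2 ≠ 0 ∧ p.1 + p.2 = k} => p.1.1 :=
    fun p q h => Subtype.ext (Prod.ext h (by rw [hsnd p, hsnd q]; exact congrArg (k - ·) h))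
  simp_rw [hsnd]
  exact ENNReal.tsum_comp_le_tsum_of_injective hinj
    fun m => ENNReal.ofReal (1 / (latNorm m ^ α * latNorm (k - m) ^ γ))

lemma tsum_pairs_le_ofReal {k : Fin d → ℤ} {B : ℝ}
    (h : ∀ S : Finset (Fin d → ℤ), ∑ m ∈ S, 1 / (latNorm m ^ α * latNorm (k - m) ^ γ) ≤ B) :
    ∑' p : {p : (Fin d → ℤ) × (Fin d → ℤ) // p.1 ≠ 0 ∧ p.2 ≠ 0 ∧ p.1 + p.2 = k},
        ENNReal.ofReal (1 / (latNorm p.1.1 ^ α * latNorm p.1.2 ^ γ)) ≤ ENNReal.ofReal B :=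
  (tsum_pairs_le_tsum k).trans <| tsum_ofReal_le_ofReal (fun _ => div_nonneg zero_le_one
    (mul_nonneg (Real.rpow_nonneg (latNorm_nonneg _) _) (Real.rpow_nonneg (latNorm_nonneg _) _))) h

end Convolution

/-- Convolution-type lattice sum estimate (Lemma `l:sumsum`):
for `α, γ > 0` with `α + γ > d`, the sum over nonzero `m + n = k` of
`|m|^{-α} |n|^{-γ}` is bounded by `C (1+|k|)^{-β}` (with a logarithmic
correction when `α = d` or `γ = d`), where `β = min {α, γ, α + γ - d}`. -/
theorem lattice_convolution_sum_estimate (d : ℕ) (α γ : ℝ) (hα : 0 < α) (hγ : 0 < γ)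
    (hsum : (d : ℝ) < α + γ) :
    ∃ C : ℝ, 0 < C ∧ ∀ k : Fin d → ℤ, k ≠ 0 →
      (((α ≠ (d : ℝ) ∧ γ ≠ (d : ℝ)) →
        (∑' p : {p : (Fin d → ℤ) × (Fin d → ℤ) //
            p.1 ≠ 0 ∧ p.2 ≠ 0 ∧ p.1 + p.2 = k},
          ENNReal.ofReal (1 / (latNorm p.1.1 ^ α * latNorm p.1.2 ^ γ)))
          ≤ ENNReal.ofReal
              (C * (1 + latNorm k) ^ (-(min α (min γ (α + γ - d)))))) ∧
      ((α = (d : ℝ) ∨ γ = (d : ℝ)) →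
        (∑' p : {p : (Fin d → ℤ) × (Fin d → ℤ) //
            p.1 ≠ 0 ∧ p.2 ≠ 0 ∧ p.1 + p.2 = k},
          ENNReal.ofReal (1 / (latNorm p.1.1 ^ α * latNorm p.1.2 ^ γ)))
          ≤ ENNReal.ofReal
              (C * (1 + latNorm k) ^ (-(min α (min γ (α + γ - d))))
                * Real.log (1 + latNorm k)))) := by
  rcases Nat.eq_zero_or_pos d with rfl | hd
  · exact ⟨1, one_pos, fun k hk => absurd (Subsingleton.elim k 0) hk⟩
  by_cases hcase : α = d ∨ γ = d
  · obtain ⟨C, hC, hbound⟩ := exists_sum_one_div_latNorm_rpow_mul_le_log hd hα hγ hsum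
    exact ⟨C, hC, fun k hk => ⟨fun h => absurd hcase (not_or_intro h.1 h.2),
      fun _ => tsum_pairs_le_ofReal (hbound k hk)⟩⟩
  · obtain ⟨hαd, hγd⟩ := not_or.mp hcase
    obtain ⟨C, hC, hbound⟩ := exists_sum_one_div_latNorm_rpow_mul_le hd hα hγ hsum hαd hγd
    exact ⟨C, hC, fun k hk => ⟨fun _ => tsum_pairs_le_ofReal (hbound k hk),
      fun h => absurd h hcase⟩⟩
end

section
/- Let s ∈ (0,1), s₁, s₂ ∈ (s,1) and p, p₁, p₂ ≥ 1 with 1/p₁ + 1/p₂ = 1/p. Then there exists a constant c > 0 such that ‖u₁ u₂‖_{W^{s,p}} ≤ c ‖u₁‖_{W^{s₁,p₁}} ‖u₂‖_{W^{s₂,p₂}} for all u₁ ∈ W^{s₁,p₁} and u₂ ∈ W^{s₂,p₂} on the two-dimensional torus. -/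
open scoped ENNReal Real
open MeasureTheory

/-- The fundamental domain `[-π,π]²` of the torus `𝕋²`. -/
noncomputable def torusBox : Set (ℝ × ℝ) := Set.Icc (-π) π ×ˢ Set.Icc (-π) π

/-- The `p`-th power of the fractional Sobolev (Sobolev–Slobodeckij) norm
`‖u‖^p_{W^{s,p}} = ∫|u|^p dx + ∬ |u(x)-u(y)|^p / |x-y|^{2+sp} dx dy`
of a periodic function on the torus `𝕋²`. -/
noncomputable def WNormP (s p : ℝ) (u : ℝ × ℝ → ℝ) : ℝ≥0∞ :=
  (∫⁻ x in torusBox, ENNReal.ofReal (|u x| ^ p)) +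
    ∫⁻ z in torusBox ×ˢ torusBox,
      ENNReal.ofReal (|u z.1 - u z.2| ^ p / ‖z.1 - z.2‖ ^ (2 + s * p))

/-!
Write `u₁u₂(x) - u₁u₂(y) = u₁(x) (u₂(x) - u₂(y)) + u₂(y) (u₁(x) - u₁(y))`. In the first term split
the weight as `|x - y|^{-(2+sp)} = (|x - y|^{-t/p₁} |x - y|^{-(2+s₂p₂)/p₂})^p` with
`t = 2 - (s₂ - s) p₁ < 2`, and apply Hölder with exponents `p₁/p`, `p₂/p`: one factor is the
Gagliardo seminorm of `u₂`, the other is `∬ |u₁(x)|^{p₁} |x - y|^{-t}`, which is at most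
`‖u₁‖^{p₁}_{L^{p₁}} · sup_x ∫ |x - y|^{-t} dy`, finite because `t` is below the dimension `2`.
The second term is symmetric, and the `L^p` part is plain Hölder.
-/

theorem lt_of_one_div_eq_one_div_add_one_div {p q r : ℝ} (hq : 0 < q) (hr : 0 < r)
    (h : 1 / p = 1 / q + 1 / r) : p < q :=
  lt_of_one_div_lt_one_div hq (by rw [h]; linarith [one_div_pos.mpr hr])

theorem pos_of_one_div_eq_one_div_add_one_div {p q r : ℝ} (hp : 0 < p) (hpq : p < q)
    (h : 1 / p = 1 / q + 1 / r) : 0 < r :=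
  one_div_pos.mp (by linarith [one_div_lt_one_div_of_lt hp hpq])

theorem locallyIntegrable_norm_rpow_neg {E : Type*} [NormedAddCommGroup E] [NormedSpace ℝ E]
    [FiniteDimensional ℝ E] [MeasurableSpace E] [BorelSpace E] (μ : Measure E) [μ.IsAddHaarMeasure]
    (hd : 1 ≤ Module.finrank ℝ E) {t : ℝ} (ht : t < Module.finrank ℝ E) :
    LocallyIntegrable (fun x : E => ‖x‖ ^ (-t)) μ :=
  locallyIntegrable_of_norm_le_rpow hd ht
    (.of_forall fun x => by rw [one_mul, Real.norm_of_nonneg (by positivity)])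
    (by fun_prop : Measurable fun x : E => ‖x‖ ^ (-t)).aestronglyMeasurable

theorem ENNReal.lintegral_ofReal_mul_rpow_le {α : Type*} [MeasurableSpace α] (μ : Measure α)
    {p q r : ℝ} (hp : 0 < p) (hpq : p < q) (hpqr : 1 / p = 1 / q + 1 / r) {f g : α → ℝ}
    (hf : Measurable f) (hg : Measurable g) (hf0 : 0 ≤ f) (hg0 : 0 ≤ g) :
    ∫⁻ a, ENNReal.ofReal ((f a * g a) ^ p) ∂μ ≤
      (∫⁻ a, ENNReal.ofReal (f a ^ q) ∂μ) ^ (p / q) *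
        (∫⁻ a, ENNReal.ofReal (g a ^ r) ∂μ) ^ (p / r) := by
  have hr : 0 < r := pos_of_one_div_eq_one_div_add_one_div hp hpq hpqr
  have hofReal : ∀ (x e : ℝ), 0 ≤ x → 0 < e → ENNReal.ofReal (x ^ e) = ENNReal.ofReal x ^ e :=
    fun x e hx he => (ENNReal.ofReal_rpow_of_nonneg hx he.le).symm
  have holder := ENNReal.lintegral_Lp_mul_le_Lq_mul_Lr hp hpq hpqr μ
    (f := fun a => ENNReal.ofReal (f a)) (g := fun a => ENNReal.ofReal (g a))
    (by fun_prop) (by fun_prop)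
  simp only [Pi.mul_apply, ← ENNReal.ofReal_mul (hf0 _)] at holder
  simp only [← hofReal _ _ (mul_nonneg (hf0 _) (hg0 _)) hp, ← hofReal _ _ (hf0 _) (hp.trans hpq),
    ← hofReal _ _ (hg0 _) hr] at holder
  calc ∫⁻ a, ENNReal.ofReal ((f a * g a) ^ p) ∂μ
      = ((∫⁻ a, ENNReal.ofReal ((f a * g a) ^ p) ∂μ) ^ (1 / p)) ^ p := by
        rw [← ENNReal.rpow_mul, one_div_mul_cancel hp.ne', ENNReal.rpow_one]
    _ ≤ ((∫⁻ a, ENNReal.ofReal (f a ^ q) ∂μ) ^ (1 / q) *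
          (∫⁻ a, ENNReal.ofReal (g a ^ r) ∂μ) ^ (1 / r)) ^ p := by gcongr
    _ = _ := by
        rw [ENNReal.mul_rpow_of_nonneg _ _ hp.le, ← ENNReal.rpow_mul, ← ENNReal.rpow_mul,
          one_div_mul_eq_div, one_div_mul_eq_div]

section Prod

variable {X : Type*} [MeasurableSpace X] {μ : Measure X} [SFinite μ]

theorem setLIntegral_prod_mul_le {s : Set X} {f : X → ℝ≥0∞} {κ : X × X → ℝ≥0∞} {C : ℝ≥0∞}
    (hf : Measurable f) (hκ : Measurable κ) (hC : ∀ x ∈ s, ∫⁻ y in s, κ (x, y) ∂μ ≤ C) :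
    ∫⁻ z in s ×ˢ s, f z.1 * κ z ∂μ.prod μ ≤ C * ∫⁻ x in s, f x ∂μ := by
  rw [← Measure.prod_restrict, lintegral_prod _ (by fun_prop)]
  calc ∫⁻ x in s, ∫⁻ y in s, f x * κ (x, y) ∂μ ∂μ
      = ∫⁻ x in s, f x * ∫⁻ y in s, κ (x, y) ∂μ ∂μ :=
        lintegral_congr fun x => lintegral_const_mul _ (hκ.comp measurable_prodMk_left)
    _ ≤ ∫⁻ x in s, f x * C ∂μ := by
        refine setLIntegral_mono (by fun_prop) fun x hx => ?_
        gcongr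
        exact hC x hx
    _ = C * ∫⁻ x in s, f x ∂μ := by
        rw [← lintegral_const_mul _ hf]
        simp_rw [mul_comm]

theorem setLIntegral_prod_swap (s : Set X) (f : X × X → ℝ≥0∞) :
    ∫⁻ z in s ×ˢ s, f z.swap ∂μ.prod μ = ∫⁻ z in s ×ˢ s, f z ∂μ.prod μ := by
  rw [← Measure.prod_restrict, lintegral_prod_swap]

end Prod

theorem Real.rpow_add_le_mul_rpow_add_rpow {a b p : ℝ} (ha : 0 ≤ a) (hb : 0 ≤ b) (hp : 1 ≤ p) :
    (a + b) ^ p ≤ 2 ^ (p - 1) * (a ^ p + b ^ p) := by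
  exact_mod_cast NNReal.rpow_add_le_mul_rpow_add_rpow ⟨a, ha⟩ ⟨b, hb⟩ hp

theorem abs_mul_sub_mul_rpow_le {p : ℝ} (hp : 1 ≤ p) (a₁ a₂ b₁ b₂ : ℝ) :
    |a₁ * a₂ - b₁ * b₂| ^ p ≤
      2 ^ (p - 1) * (|a₁| ^ p * |a₂ - b₂| ^ p + |b₂| ^ p * |a₁ - b₁| ^ p) := by
  have hsplit : |a₁ * a₂ - b₁ * b₂| ≤ |a₁| * |a₂ - b₂| + |b₂| * |a₁ - b₁| := by
    calc |a₁ * a₂ - b₁ * b₂| = |a₁ * (a₂ - b₂) + b₂ * (a₁ - b₁)| := by congr 1; ring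
      _ ≤ |a₁| * |a₂ - b₂| + |b₂| * |a₁ - b₁| := by
        rw [← abs_mul, ← abs_mul]; exact abs_add_le _ _
  calc |a₁ * a₂ - b₁ * b₂| ^ p ≤ (|a₁| * |a₂ - b₂| + |b₂| * |a₁ - b₁|) ^ p := by gcongr
    _ ≤ _ := by
      rw [← Real.mul_rpow (abs_nonneg _) (abs_nonneg _),
        ← Real.mul_rpow (abs_nonneg _) (abs_nonneg _)]
      exact Real.rpow_add_le_mul_rpow_add_rpow (by positivity) (by positivity) hp

theorem mul_rpow_neg_rpow {a k : ℝ} (ha : 0 ≤ a) (hk : 0 ≤ k) (c q : ℝ) :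
    (a * k ^ (-c)) ^ q = a ^ q * k ^ (-(c * q)) := by
  rw [Real.mul_rpow ha (by positivity), ← Real.rpow_mul hk, neg_mul]

theorem rpow_mul_rpow_div_rpow_le {a b k : ℝ} (ha : 0 ≤ a) (hb : 0 ≤ b) (hk : 0 ≤ k)
    {e f p : ℝ} (hE : (e + f) * p ≠ 0) :
    a ^ p * b ^ p / k ^ ((e + f) * p) ≤ (a * k ^ (-e) * (b * k ^ (-f))) ^ p := by
  rcases hk.eq_or_lt with rfl | hk
  · rw [Real.zero_rpow hE, div_zero]
    positivity
  rw [mul_mul_mul_comm, ← Real.rpow_add hk, Real.mul_rpow (mul_nonneg ha hb) (by positivity),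
    Real.mul_rpow ha hb, ← Real.rpow_mul hk.le, div_eq_mul_inv, ← Real.rpow_neg hk.le, ← neg_add,
    neg_mul]

theorem lintegral_closedBall_norm_rpow_neg_lt_top {t : ℝ} (ht : t < 2) (R : ℝ) :
    ∫⁻ z in Metric.closedBall (0 : ℝ × ℝ) R, ENNReal.ofReal (‖z‖ ^ (-t)) < ∞ :=
  ((locallyIntegrable_norm_rpow_neg volume (by simp) (by simpa using ht)).integrableOn_isCompact
    (isCompact_closedBall 0 R)).lintegral_lt_top

theorem norm_sub_le_of_mem_torusBox {x y : ℝ × ℝ} (hx : x ∈ torusBox) (hy : y ∈ torusBox) :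
    ‖x - y‖ ≤ 2 * π := by
  simp only [torusBox, Set.mem_prod, Set.mem_Icc] at hx hy
  refine max_le ?_ ?_ <;> simp only [Prod.fst_sub, Prod.snd_sub, Real.norm_eq_abs] <;>
    rw [abs_le] <;> constructor <;> linarith

theorem measurableSet_torusBox : MeasurableSet torusBox :=
  measurableSet_Icc.prod measurableSet_Icc

theorem lintegral_torusBox_norm_sub_rpow_neg_le (t : ℝ) {x : ℝ × ℝ} (hx : x ∈ torusBox) :
    ∫⁻ y in torusBox, ENNReal.ofReal (‖x - y‖ ^ (-t)) ≤
      ∫⁻ z in Metric.closedBall (0 : ℝ × ℝ) (2 * π), ENNReal.ofReal (‖z‖ ^ (-t)) := by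
  set k : ℝ × ℝ → ℝ≥0∞ :=
    (Metric.closedBall 0 (2 * π)).indicator fun z => ENNReal.ofReal (‖z‖ ^ (-t))
  calc ∫⁻ y in torusBox, ENNReal.ofReal (‖x - y‖ ^ (-t))
      = ∫⁻ y in torusBox, k (x - y) := by
        refine setLIntegral_congr_fun measurableSet_torusBox fun y hy => ?_
        have hxy : x - y ∈ Metric.closedBall 0 (2 * π) :=
          mem_closedBall_zero_iff.mpr (norm_sub_le_of_mem_torusBox hx hy)
        exact (Set.indicator_of_mem hxy fun z => ENNReal.ofReal (‖z‖ ^ (-t))).symm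
    _ ≤ ∫⁻ y, k (x - y) := setLIntegral_le_lintegral _ _
    _ = _ := by rw [lintegral_sub_left_eq_self, lintegral_indicator measurableSet_closedBall]

noncomputable def torusLpPow (p : ℝ) (u : ℝ × ℝ → ℝ) : ℝ≥0∞ :=
  ∫⁻ x in torusBox, ENNReal.ofReal (|u x| ^ p)

noncomputable def torusGagliardo (s p : ℝ) (u : ℝ × ℝ → ℝ) : ℝ≥0∞ :=
  ∫⁻ z in torusBox ×ˢ torusBox, ENNReal.ofReal (|u z.1 - u z.2| ^ p / ‖z.1 - z.2‖ ^ (2 + s * p))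

noncomputable def torusCrossTerm (s p : ℝ) (v w : ℝ × ℝ → ℝ) : ℝ≥0∞ :=
  ∫⁻ z in torusBox ×ˢ torusBox,
    ENNReal.ofReal (|v z.1| ^ p * |w z.1 - w z.2| ^ p / ‖z.1 - z.2‖ ^ (2 + s * p))

theorem torusCrossTerm_le {s sb p q r : ℝ} (hs : 0 ≤ s) (hp : 0 < p) (hpq : p < q)
    (hpqr : 1 / p = 1 / q + 1 / r) {K : ℝ≥0∞}
    (hK : ∀ x ∈ torusBox,
      ∫⁻ y in torusBox, ENNReal.ofReal (‖x - y‖ ^ (-(2 - (sb - s) * q))) ≤ K)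
    {v w : ℝ × ℝ → ℝ} (hv : Measurable v) (hw : Measurable w) :
    torusCrossTerm s p v w ≤ (K * torusLpPow q v) ^ (p / q) * torusGagliardo sb r w ^ (p / r) := by
  set t := 2 - (sb - s) * q
  have hq : 0 < q := hp.trans hpq
  have hr : 0 < r := pos_of_one_div_eq_one_div_add_one_div hp hpq hpqr
  have hE : (t / q + (2 + sb * r) / r) * p = 2 + s * p := by
    rw [show t / q + (2 + sb * r) / r = 2 * (1 / q + 1 / r) + s by field_simp; ring, ← hpqr]
    field_simp
  set F : (ℝ × ℝ) × (ℝ × ℝ) → ℝ := fun z => |v z.1| * ‖z.1 - z.2‖ ^ (-(t / q))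
  set G : (ℝ × ℝ) × (ℝ × ℝ) → ℝ := fun z => |w z.1 - w z.2| * ‖z.1 - z.2‖ ^ (-((2 + sb * r) / r))
  calc torusCrossTerm s p v w
      ≤ ∫⁻ z in torusBox ×ˢ torusBox, ENNReal.ofReal ((F z * G z) ^ p) := by
        refine lintegral_mono fun z => ENNReal.ofReal_le_ofReal ?_
        rw [← hE]
        exact rpow_mul_rpow_div_rpow_le (abs_nonneg _) (abs_nonneg _) (norm_nonneg _)
          (by rw [hE]; positivity)
    _ ≤ (∫⁻ z in torusBox ×ˢ torusBox, ENNReal.ofReal (F z ^ q)) ^ (p / q) *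
          (∫⁻ z in torusBox ×ˢ torusBox, ENNReal.ofReal (G z ^ r)) ^ (p / r) :=
        ENNReal.lintegral_ofReal_mul_rpow_le _ hp hpq hpqr (by fun_prop) (by fun_prop)
          (fun z => by positivity) (fun z => by positivity)
    _ ≤ (K * torusLpPow q v) ^ (p / q) * torusGagliardo sb r w ^ (p / r) := by
        gcongr
        · calc ∫⁻ z in torusBox ×ˢ torusBox, ENNReal.ofReal (F z ^ q)
              = ∫⁻ z in torusBox ×ˢ torusBox,
                  ENNReal.ofReal (|v z.1| ^ q) * ENNReal.ofReal (‖z.1 - z.2‖ ^ (-t)) := by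
                refine lintegral_congr fun z => ?_
                rw [mul_rpow_neg_rpow (abs_nonneg _) (norm_nonneg _), div_mul_cancel₀ _ hq.ne',
                  ENNReal.ofReal_mul (by positivity)]
            _ ≤ K * torusLpPow q v :=
                setLIntegral_prod_mul_le (by fun_prop) (by fun_prop) hK
        · refine le_of_eq (lintegral_congr fun z => ?_)
          rw [mul_rpow_neg_rpow (abs_nonneg _) (norm_nonneg _), div_mul_cancel₀ _ hr.ne',
            Real.rpow_neg (norm_nonneg _), div_eq_mul_inv]

theorem torusGagliardo_mul_le {s p : ℝ} (hp : 1 ≤ p) {u v : ℝ × ℝ → ℝ} (hu : Measurable u)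
    (hv : Measurable v) :
    torusGagliardo s p (fun x => u x * v x) ≤
      ENNReal.ofReal (2 ^ (p - 1)) * (torusCrossTerm s p u v + torusCrossTerm s p v u) := by
  have hswap : torusCrossTerm s p v u = ∫⁻ z in torusBox ×ˢ torusBox,
      ENNReal.ofReal (|v z.2| ^ p * |u z.1 - u z.2| ^ p / ‖z.1 - z.2‖ ^ (2 + s * p)) := by
    rw [torusCrossTerm, Measure.volume_eq_prod, ← setLIntegral_prod_swap]
    refine lintegral_congr fun z => ?_
    rw [Prod.fst_swap, Prod.snd_swap, abs_sub_comm, norm_sub_rev]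
  rw [hswap, mul_add, torusCrossTerm, ← lintegral_const_mul' _ _ ENNReal.ofReal_ne_top,
    ← lintegral_const_mul' _ _ ENNReal.ofReal_ne_top, ← lintegral_add_left (by fun_prop)]
  refine lintegral_mono fun z => ?_
  set K := ‖z.1 - z.2‖ ^ (2 + s * p)
  have hK : 0 ≤ K := by positivity
  have hreal : |u z.1 * v z.1 - u z.2 * v z.2| ^ p / K ≤
      2 ^ (p - 1) * (|u z.1| ^ p * |v z.1 - v z.2| ^ p / K) +
        2 ^ (p - 1) * (|v z.2| ^ p * |u z.1 - u z.2| ^ p / K) := by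
    calc |u z.1 * v z.1 - u z.2 * v z.2| ^ p / K
        ≤ 2 ^ (p - 1) *
            (|u z.1| ^ p * |v z.1 - v z.2| ^ p + |v z.2| ^ p * |u z.1 - u z.2| ^ p) / K := by
          gcongr
          exact abs_mul_sub_mul_rpow_le hp _ _ _ _
      _ = _ := by ring
  refine (ENNReal.ofReal_le_ofReal hreal).trans_eq ?_
  rw [ENNReal.ofReal_add (by positivity) (by positivity), ENNReal.ofReal_mul (by positivity),
    ENNReal.ofReal_mul (by positivity)]

theorem torusLpPow_mul_le {p q r : ℝ} (hp : 0 < p) (hpq : p < q) (hpqr : 1 / p = 1 / q + 1 / r)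
    {u v : ℝ × ℝ → ℝ} (hu : Measurable u) (hv : Measurable v) :
    torusLpPow p (fun x => u x * v x) ≤ torusLpPow q u ^ (p / q) * torusLpPow r v ^ (p / r) := by
  simp only [torusLpPow, abs_mul]
  exact ENNReal.lintegral_ofReal_mul_rpow_le _ hp hpq hpqr (by fun_prop) (by fun_prop)
    (fun _ => abs_nonneg _) (fun _ => abs_nonneg _)

theorem exists_WNormP_mul_le {s s₁ s₂ p p₁ p₂ : ℝ} (hs : 0 ≤ s) (hs₁ : s < s₁) (hs₂ : s < s₂)
    (hp : 1 ≤ p) (hp₁ : 0 < p₁) (hp₂ : 0 < p₂) (hexp : 1 / p₁ + 1 / p₂ = 1 / p) :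
    ∃ C : ℝ≥0∞, C ≠ ∞ ∧ ∀ u₁ u₂ : ℝ × ℝ → ℝ, Measurable u₁ → Measurable u₂ →
      WNormP s p (fun x => u₁ x * u₂ x) ≤
        C * (WNormP s₁ p₁ u₁ ^ (p / p₁) * WNormP s₂ p₂ u₂ ^ (p / p₂)) := by
  set K₁ := ∫⁻ z in Metric.closedBall (0 : ℝ × ℝ) (2 * π),
    ENNReal.ofReal (‖z‖ ^ (-(2 - (s₂ - s) * p₁)))
  set K₂ := ∫⁻ z in Metric.closedBall (0 : ℝ × ℝ) (2 * π),
    ENNReal.ofReal (‖z‖ ^ (-(2 - (s₁ - s) * p₂)))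
  have hK₁ : K₁ ≠ ∞ := (lintegral_closedBall_norm_rpow_neg_lt_top (by nlinarith) _).ne
  have hK₂ : K₂ ≠ ∞ := (lintegral_closedBall_norm_rpow_neg_lt_top (by nlinarith) _).ne
  set c := ENNReal.ofReal (2 ^ (p - 1))
  refine ⟨1 + c * (K₁ ^ (p / p₁) + K₂ ^ (p / p₂)), by finiteness,
    fun u₁ u₂ hu₁ hu₂ => ?_⟩
  have hp0 : 0 < p := by linarith
  have hpp₁ : p < p₁ := lt_of_one_div_eq_one_div_add_one_div hp₁ hp₂ hexp.symm
  have hpp₂ : p < p₂ :=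
    lt_of_one_div_eq_one_div_add_one_div hp₂ hp₁ (by rw [← hexp, add_comm])
  have hcross₁ := torusCrossTerm_le (sb := s₂) (r := p₂) hs hp0 hpp₁ hexp.symm
    (fun x hx => lintegral_torusBox_norm_sub_rpow_neg_le _ hx) hu₁ hu₂
  have hcross₂ := torusCrossTerm_le (sb := s₁) (r := p₁) hs hp0 hpp₂ (by rw [← hexp, add_comm])
    (fun x hx => lintegral_torusBox_norm_sub_rpow_neg_le _ hx) hu₂ hu₁
  set W₁ := WNormP s₁ p₁ u₁
  set W₂ := WNormP s₂ p₂ u₂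
  have hL₁ : torusLpPow p₁ u₁ ≤ W₁ := le_self_add
  have hL₂ : torusLpPow p₂ u₂ ≤ W₂ := le_self_add
  have hG₁ : torusGagliardo s₁ p₁ u₁ ≤ W₁ := le_add_self
  have hG₂ : torusGagliardo s₂ p₂ u₂ ≤ W₂ := le_add_self
  calc WNormP s p (fun x => u₁ x * u₂ x)
      = torusLpPow p (fun x => u₁ x * u₂ x) + torusGagliardo s p (fun x => u₁ x * u₂ x) := rfl
    _ ≤ torusLpPow p₁ u₁ ^ (p / p₁) * torusLpPow p₂ u₂ ^ (p / p₂) +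
          c * ((K₁ * torusLpPow p₁ u₁) ^ (p / p₁) * torusGagliardo s₂ p₂ u₂ ^ (p / p₂) +
            (K₂ * torusLpPow p₂ u₂) ^ (p / p₂) * torusGagliardo s₁ p₁ u₁ ^ (p / p₁)) := by
        refine add_le_add (torusLpPow_mul_le hp0 hpp₁ hexp.symm hu₁ hu₂) ?_
        refine (torusGagliardo_mul_le hp hu₁ hu₂).trans ?_
        gcongr
    _ ≤ W₁ ^ (p / p₁) * W₂ ^ (p / p₂) +
          c * ((K₁ * W₁) ^ (p / p₁) * W₂ ^ (p / p₂) + (K₂ * W₂) ^ (p / p₂) * W₁ ^ (p / p₁)) := by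
        gcongr
    _ = (1 + c * (K₁ ^ (p / p₁) + K₂ ^ (p / p₂))) * (W₁ ^ (p / p₁) * W₂ ^ (p / p₂)) := by
        rw [ENNReal.mul_rpow_of_nonneg _ _ (by positivity),
          ENNReal.mul_rpow_of_nonneg _ _ (by positivity)]
        ring

/-- Fractional Leibniz-type estimate: for `s ∈ (0,1)`, `s₁, s₂ ∈ (s,1)` and
`1/p₁ + 1/p₂ = 1/p`, `‖u₁u₂‖_{W^{s,p}} ≤ c ‖u₁‖_{W^{s₁,p₁}} ‖u₂‖_{W^{s₂,p₂}}`. -/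
theorem product_fractional_sobolev_estimate (s s₁ s₂ p p₁ p₂ : ℝ)
    (hs : s ∈ Set.Ioo (0:ℝ) 1) (hs₁ : s₁ ∈ Set.Ioo s 1) (hs₂ : s₂ ∈ Set.Ioo s 1)
    (hp : 1 ≤ p) (hp₁ : 1 ≤ p₁) (hp₂ : 1 ≤ p₂)
    (hexp : 1 / p₁ + 1 / p₂ = 1 / p) :
    ∃ c : ℝ, 0 < c ∧ ∀ u₁ u₂ : ℝ × ℝ → ℝ, Measurable u₁ → Measurable u₂ →
      (∀ x : ℝ × ℝ, u₁ (x.1 + 2 * π, x.2) = u₁ x ∧ u₁ (x.1, x.2 + 2 * π) = u₁ x) →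
      (∀ x : ℝ × ℝ, u₂ (x.1 + 2 * π, x.2) = u₂ x ∧ u₂ (x.1, x.2 + 2 * π) = u₂ x) →
      WNormP s p (fun x => u₁ x * u₂ x) ^ (1 / p) ≤
        ENNReal.ofReal c * WNormP s₁ p₁ u₁ ^ (1 / p₁) * WNormP s₂ p₂ u₂ ^ (1 / p₂) := by
  obtain ⟨C, hC, hbound⟩ := exists_WNormP_mul_le hs.1.le hs₁.1 hs₂.1 hp (by linarith)
    (by linarith) hexp
  have hp0 : 0 < p := by linarith
  have hCp : C ^ (1 / p) ≠ ∞ := by finiteness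
  have hroot (q : ℝ) : p / q * (1 / p) = 1 / q := by field_simp
  refine ⟨(C ^ (1 / p)).toReal + 1, by positivity, fun u₁ u₂ hu₁ hu₂ _ _ => ?_⟩
  calc WNormP s p (fun x => u₁ x * u₂ x) ^ (1 / p)
      ≤ (C * (WNormP s₁ p₁ u₁ ^ (p / p₁) * WNormP s₂ p₂ u₂ ^ (p / p₂))) ^ (1 / p) := by
        gcongr
        exact hbound u₁ u₂ hu₁ hu₂
    _ = C ^ (1 / p) * WNormP s₁ p₁ u₁ ^ (1 / p₁) * WNormP s₂ p₂ u₂ ^ (1 / p₂) := by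
        rw [ENNReal.mul_rpow_of_nonneg _ _ (by positivity),
          ENNReal.mul_rpow_of_nonneg _ _ (by positivity), ← ENNReal.rpow_mul, ← ENNReal.rpow_mul,
          hroot, hroot, mul_assoc]
    _ ≤ _ := by
        gcongr
        exact (ENNReal.le_ofReal_iff_toReal_le hCp (by positivity)).mpr (by linarith)
end
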